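/- arXiv:2106.15582 — 6 statements merged into one kernel-verified Lean document; each statement's English description precedes it below -/
import Mathlib

section
/- Let G be a group equipped with a total preorder ≤ that is invariant under left multiplication (g ≤ h implies fg ≤ fh for all f). Let a, a', b ∈ G satisfy a' = b⁻¹ a b a. If 1 ≤ b⁻¹ a'^m for every integer m, then for every integer m₂ there exists an integer m₁ such that 1 ≤ a'^{-m₁} b⁻¹ a^{m₂}. -/
/-- Lemma 1 of the paper: in a group with a left-invariant total preorder,
if `a' = b⁻¹ a b a` and `1 ≤ b⁻¹ a'^m` for all integers `m`, then for every
integer `m₂` there is an integer `m₁` with `1 ≤ a'^{-m₁} b⁻¹ a^{m₂}`. -/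
theorem stmt1 {G : Type*} [Group G] (le : G → G → Prop)
    (hrefl : ∀ g, le g g)
    (htrans : ∀ x y z, le x y → le y z → le x z)
    (htotal : ∀ x y, le x y ∨ le y x)
    (hinv : ∀ f g h, le g h → le (f * g) (f * h))
    (a a' b : G) (ha' : a' = b⁻¹ * a * b * a)
    (hyp : ∀ m : ℤ, le 1 (b⁻¹ * a' ^ m)) :
    ∀ m₂ : ℤ, ∃ m₁ : ℤ, le 1 (a' ^ (-m₁) * b⁻¹ * a ^ m₂) := by
  classical
  have hba' : b * a' = a * b * a := by rw [ha']; group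
  have hle_congr : ∀ {x y x' y' : G}, x = x' → y = y' → le x y → le x' y' := by
    rintro x y x' y' rfl rfl h; exact h
  have hb_le : ∀ j : ℤ, le b (a' ^ j) := by
    intro j
    exact hle_congr (by group) (by group) (hinv b _ _ (hyp j))
  have hb1 : le b 1 := by simpa using hb_le 0
  have key : ∀ n : ℤ, ∃ m : ℤ, le (b * a' ^ m) (a ^ n) := by
    intro n
    obtain ⟨N, rfl | rfl⟩ := n.eq_nat_or_neg
    · -- nonnegative exponents
      by_cases hD : ∃ k : ℤ, ∀ m : ℤ, le (a⁻¹ * a' ^ k) (a' ^ m)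
      · obtain ⟨k₀, hk⟩ := hD
        have haA : ∀ m : ℤ, le (a' ^ k₀) (a * a' ^ m) := fun m =>
          hle_congr (by group) rfl (hinv a _ _ (hk m))
        have hpow : ∀ M : ℕ, le (a' ^ k₀) (a ^ ((M : ℤ) + 1)) := by
          intro M
          induction M with
          | zero => exact hle_congr rfl (by push_cast; group) (haA 0)
          | succ M ih =>
            exact htrans _ _ _ (haA k₀)
              (hle_congr rfl (by push_cast; group) (hinv a _ _ ih))
        cases N with
        | zero => exact ⟨0, by simpa using hb1⟩
        | succ M =>
          refine ⟨0, htrans _ _ _ (hle_congr (by group) rfl (hb_le k₀)) ?_⟩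
          exact hle_congr rfl (by push_cast; group) (hpow M)
      · push_neg at hD
        have step : ∀ m : ℤ, ∃ k : ℤ, le (a * a' ^ k) (a' ^ m) := by
          intro m
          obtain ⟨m', hm'⟩ := hD m
          have h := (htotal (a⁻¹ * a' ^ m) (a' ^ m')).resolve_left hm'
          exact ⟨m', hle_congr rfl (by group) (hinv a _ _ h)⟩
        induction N with
        | zero => exact ⟨0, by simpa using hb1⟩
        | succ M ih =>
          obtain ⟨m, hm⟩ := ih
          obtain ⟨k, hk⟩ := step m
          have h2 := htrans _ _ _ (hinv b _ _ hk) hm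
          have h3 := hinv a _ _ h2
          refine ⟨k + 1, hle_congr ?_ (by push_cast; group) h3⟩
          calc a * (b * (a * a' ^ k)) = (a * b * a) * a' ^ k := by group
            _ = (b * a') * a' ^ k := by rw [hba']
            _ = b * a' ^ (k + 1) := by group
    · -- nonpositive exponents
      by_cases hU : ∃ k : ℤ, ∀ m : ℤ, le (a * a' ^ k) (a' ^ m)
      · obtain ⟨k₀, hk⟩ := hU
        have haA : ∀ m : ℤ, le (a' ^ k₀) (a⁻¹ * a' ^ m) := fun m =>
          hle_congr (by group) rfl (hinv a⁻¹ _ _ (hk m))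
        have hpow : ∀ M : ℕ, le (a' ^ k₀) (a ^ (-(M : ℤ) - 1)) := by
          intro M
          induction M with
          | zero => exact hle_congr rfl (by push_cast; group) (haA 0)
          | succ M ih =>
            exact htrans _ _ _ (haA k₀)
              (hle_congr rfl (by push_cast; group) (hinv a⁻¹ _ _ ih))
        cases N with
        | zero => exact ⟨0, by simpa using hb1⟩
        | succ M =>
          refine ⟨0, htrans _ _ _ (hle_congr (by group) rfl (hb_le k₀)) ?_⟩
          exact hle_congr rfl (by push_cast; group) (hpow M)
      · push_neg at hU
        have step : ∀ j : ℤ, ∃ k : ℤ, le (a' ^ k) (a * a' ^ j) := by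
          intro j
          obtain ⟨m', hm'⟩ := hU j
          exact ⟨m', (htotal (a * a' ^ j) (a' ^ m')).resolve_left hm'⟩
        induction N with
        | zero => exact ⟨0, by simpa using hb1⟩
        | succ M ih =>
          obtain ⟨m, hm⟩ := ih
          obtain ⟨k, hk⟩ := step (m - 1)
          have h1 := hinv b _ _ hk
          have e0 : a⁻¹ * (b * a' ^ m) = b * (a * a' ^ (m - 1)) := by
            calc a⁻¹ * (b * a' ^ m) = a⁻¹ * ((b * a') * a' ^ (m - 1)) := by group
              _ = a⁻¹ * ((a * b * a) * a' ^ (m - 1)) := by rw [hba']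
              _ = b * (a * a' ^ (m - 1)) := by group
          have e1 := e0.symm
          have h1' := hle_congr rfl e1 h1
          have h2 := hinv a⁻¹ _ _ hm
          exact ⟨k, htrans _ _ _ h1'
            (hle_congr rfl (by push_cast; group) h2)⟩
  intro m₂
  obtain ⟨m, hm⟩ := key m₂
  refine ⟨m, ?_⟩
  exact hle_congr (by group) (by group) (hinv (a' ^ (-m) * b⁻¹) _ _ hm)
end

section
/- Let G be a group equipped with a total preorder ≤ that is invariant under left multiplication, let a, a' ∈ G, and let m₂ be an integer. Suppose that a'^{-m} a^{m₂} a'^{m} ≤ 1 for every integer m with m·m₂ ≥ 0 (i.e., m = 0 or m has the same sign as m₂). Then 1 ≤ a'^{-m₂} (a' a⁻¹)^{m₂}. -/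
section Aux

variable {G : Type*} [Group G] (le : G → G → Prop)

private lemma aux_pow_le_one
    (hrefl : ∀ g, le g g)
    (htrans : ∀ x y z, le x y → le y z → le x z)
    (htotal : ∀ x y, le x y ∨ le y x)
    (hinv : ∀ f g h, le g h → le (f * g) (f * h))
    (c : G) (n : ℕ) (hn : 0 < n) (h : le (c ^ n) 1) : le c 1 := by
  rcases htotal c 1 with h1 | h1
  · exact h1
  · have hpow : ∀ k : ℕ, le 1 (c ^ k) := by
      intro k
      induction k with
      | zero => simpa using hrefl 1
      | succ k ih =>
        have h2 := hinv c 1 (c ^ k) ih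
        rw [mul_one, ← pow_succ'] at h2
        exact htrans _ _ _ h1 h2
    obtain ⟨m, rfl⟩ := Nat.exists_eq_succ_of_ne_zero hn.ne'
    have h2 := hinv c 1 (c ^ m) (hpow m)
    rw [mul_one, ← pow_succ'] at h2
    exact htrans _ _ _ h2 h

private lemma aux_prod_le_one
    (hrefl : ∀ g, le g g)
    (htrans : ∀ x y z, le x y → le y z → le x z)
    (hinv : ∀ f g h, le g h → le (f * g) (f * h))
    (f : ℕ → G) (n : ℕ) (h : ∀ k < n, le (f k) 1) :
    le (((List.range n).map f).prod) 1 := by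
  induction n with
  | zero => simpa using hrefl 1
  | succ n ih =>
    rw [List.range_succ, List.map_append, List.prod_append, List.map_singleton,
      List.prod_singleton]
    have h1 := hinv (((List.range n).map f).prod) (f n) 1 (h n (by omega))
    rw [mul_one] at h1
    exact htrans _ _ _ h1 (ih fun k hk => h k (by omega))

private lemma aux_telescope1 (a a' : G) (n : ℕ) :
    (a * a'⁻¹) ^ n * a' ^ n
      = ((List.range n).map fun k => (a' ^ k)⁻¹ * a * a' ^ k).prod := by
  induction n with
  | zero => simp
  | succ n ih =>
    rw [List.range_succ, List.map_append, List.prod_append, List.map_singleton,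
      List.prod_singleton, ← ih, pow_succ (a * a'⁻¹), pow_succ a']
    group

private lemma aux_telescope2 (a a' : G) (n : ℕ) :
    (a' * a⁻¹) ^ n * (a' ^ n)⁻¹
      = ((List.range n).map fun k => a' ^ (k + 1) * a⁻¹ * (a' ^ (k + 1))⁻¹).prod := by
  induction n with
  | zero => simp
  | succ n ih =>
    rw [List.range_succ, List.map_append, List.prod_append, List.map_singleton,
      List.prod_singleton, ← ih, pow_succ (a' * a⁻¹), pow_succ a']
    group

end Aux

/-- The key positivity step in the proof of Lemma 1: in a group with a
left-invariant total preorder, if `a'^{-m} a^{m₂} a'^{m} ≤ 1` for every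
integer `m` with `m·m₂ ≥ 0`, then `1 ≤ a'^{-m₂} (a' a⁻¹)^{m₂}`. -/
theorem stmt8 {G : Type*} [Group G] (le : G → G → Prop)
    (hrefl : ∀ g, le g g)
    (htrans : ∀ x y z, le x y → le y z → le x z)
    (htotal : ∀ x y, le x y ∨ le y x)
    (hinv : ∀ f g h, le g h → le (f * g) (f * h))
    (a a' : G) (m₂ : ℤ)
    (hyp : ∀ m : ℤ, 0 ≤ m * m₂ → le (a' ^ (-m) * a ^ m₂ * a' ^ m) 1) :
    le 1 (a' ^ (-m₂) * (a' * a⁻¹) ^ m₂) := by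
  have key : ∀ x : G, le x⁻¹ 1 → le 1 x := by
    intro x h
    have := hinv x x⁻¹ 1 h
    simpa using this
  obtain ⟨n, rfl | rfl⟩ := m₂.eq_nat_or_neg
  · apply key
    have hx : (a' ^ (-(n : ℤ)) * (a' * a⁻¹) ^ (n : ℤ))⁻¹
        = (a * a'⁻¹) ^ n * a' ^ n := by
      rw [zpow_neg, zpow_natCast, zpow_natCast, mul_inv_rev, inv_inv, ← inv_pow,
        mul_inv_rev, inv_inv]
    rw [hx, aux_telescope1]
    apply aux_prod_le_one le hrefl htrans hinv
    intro k hk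
    apply aux_pow_le_one le hrefl htrans htotal hinv _ n (by omega)
    have h1 := hyp (k : ℤ) (by positivity)
    have h2 : ((a' ^ k)⁻¹ * a * a' ^ k) ^ n = (a' ^ k)⁻¹ * a ^ n * a' ^ k := by
      simpa using conj_pow (α := G) (i := n) (a := (a' ^ k)⁻¹) (b := a)
    rw [h2]
    simpa [zpow_neg, zpow_natCast] using h1
  · apply key
    rw [neg_neg]
    have hx : (a' ^ (n : ℤ) * (a' * a⁻¹) ^ (-(n : ℤ)))⁻¹
        = (a' * a⁻¹) ^ n * (a' ^ n)⁻¹ := by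
      rw [zpow_neg, zpow_natCast, zpow_natCast]
      group
    rw [hx, aux_telescope2]
    apply aux_prod_le_one le hrefl htrans hinv
    intro k hk
    apply aux_pow_le_one le hrefl htrans htotal hinv _ n (by omega)
    have h1 := hyp (-((k : ℤ) + 1)) (by nlinarith [Int.natCast_nonneg k, Int.natCast_nonneg n])
    have hcast : ((k : ℤ) + 1) = ((k + 1 : ℕ) : ℤ) := by push_cast; ring
    rw [neg_neg, hcast] at h1
    simp only [zpow_neg, zpow_natCast] at h1
    have h2 : (a' ^ (k + 1) * a⁻¹ * (a' ^ (k + 1))⁻¹) ^ n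
        = a' ^ (k + 1) * (a ^ n)⁻¹ * (a' ^ (k + 1))⁻¹ := by
      rw [conj_pow, inv_pow]
    rw [h2]
    simpa [zpow_neg, zpow_natCast] using h1
end

section
/- Let n ≥ 1, let k₁,…,kₙ ∈ ℤ, and let G be a group equipped with a total preorder ≤ invariant under left multiplication, containing elements a₁,…,aₙ, b₁,…,bₙ satisfying a_{i+1} = b_i⁻¹ a_i b_i a_i and a_i^{k_i} = b_i a_i b_i b_{i-1}⁻¹ for all i (indices modulo n). If 1 ≤ b_i⁻¹ a_{i+1}^{m} for every i and every integer m, then for every i and every integer m₂ there exists an integer m₁ such that (b_i a_{i+1})⁻¹ a_{i+1}^{m₁} ≤ (b_{i-1} a_i)⁻¹ a_i^{m₂}. -/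
section Aux

variable {G : Type*} [Group G] {le : G → G → Prop}

private lemma aux_pos_mul
    (htrans : ∀ x y z, le x y → le y z → le x z)
    (hinv : ∀ f g h, le g h → le (f * g) (f * h))
    {g h : G} (hg : le 1 g) (hh : le 1 h) : le 1 (g * h) := by
  have h1 := hinv g 1 h hh
  rw [mul_one] at h1
  exact htrans _ _ _ hg h1

private lemma aux_pos_pow
    (hrefl : ∀ g, le g g)
    (htrans : ∀ x y z, le x y → le y z → le x z)
    (hinv : ∀ f g h, le g h → le (f * g) (f * h))
    {g : G} (hg : le 1 g) : ∀ n : ℕ, le 1 (g ^ n) := by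
  intro n
  induction n with
  | zero => simpa using hrefl 1
  | succ n ih =>
    rw [pow_succ]
    exact aux_pos_mul htrans hinv ih hg

private lemma aux_pos_inv
    (htotal : ∀ x y, le x y ∨ le y x)
    (hinv : ∀ f g h, le g h → le (f * g) (f * h))
    {g : G} (hg : ¬ le 1 g) : le 1 g⁻¹ := by
  rcases htotal 1 g with h | h
  · exact absurd h hg
  · have h2 := hinv g⁻¹ g 1 h
    rwa [inv_mul_cancel, mul_one] at h2

/-- If `1 ≤ c` and `1 ≤ c * w * c⁻¹` and `1 ≤ t`, then `c⁻¹ ≤ w * t`. -/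
private lemma aux_conj_case
    (htrans : ∀ x y z, le x y → le y z → le x z)
    (hinv : ∀ f g h, le g h → le (f * g) (f * h))
    {w t c : G} (ht : le 1 t) (hc : le 1 c) (hconj : le 1 (c * w * c⁻¹)) :
    le c⁻¹ (w * t) := by
  have d3 : le 1 (c * w * c⁻¹ * c) := aux_pos_mul htrans hinv hconj hc
  rw [inv_mul_cancel_right] at d3
  have d4 := hinv c⁻¹ 1 (c * w) d3
  rw [mul_one, ← mul_assoc, inv_mul_cancel, one_mul] at d4
  have d5 := hinv w 1 t ht
  rw [mul_one] at d5
  exact htrans _ _ _ d4 d5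

/-- The key lemma: if `x = b⁻¹ a b a` and `1 ≤ b⁻¹ xᵐ` for all `m : ℤ`, then
for every `K : ℤ` there is `m₁ : ℤ` with `x^m₁ ≤ b⁻¹ a^K`. -/
private lemma aux_key
    (hrefl : ∀ g, le g g)
    (htrans : ∀ x y z, le x y → le y z → le x z)
    (htotal : ∀ x y, le x y ∨ le y x)
    (hinv : ∀ f g h, le g h → le (f * g) (f * h))
    (a b x : G) (hx : x = b⁻¹ * a * b * a)
    (hp : ∀ m : ℤ, le 1 (b⁻¹ * x ^ m)) (K : ℤ) :
    ∃ m₁ : ℤ, le (x ^ m₁) (b⁻¹ * a ^ K) := by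
  set v : G := b⁻¹ * a * b with hv
  have hb : le 1 b⁻¹ := by simpa using hp 0
  have hvK : v ^ K * b⁻¹ = b⁻¹ * a ^ K := by
    have h1 : v ^ K = b⁻¹ * a ^ K * (b⁻¹)⁻¹ := by
      rw [hv, show b⁻¹ * a * b = b⁻¹ * a * (b⁻¹)⁻¹ by rw [inv_inv], conj_zpow]
    rw [h1]; group
  have hva : v * a = x := by rw [hv, hx]
  have hvia : v⁻¹ * x = a := by rw [← hva]; group
  -- Case 1 : `1 ≤ a^K`
  by_cases hK1 : le 1 (a ^ K)
  · refine ⟨0, ?_⟩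
    have h1 := hinv b⁻¹ 1 (a ^ K) hK1
    rw [mul_one] at h1
    have h2 := htrans _ _ _ hb h1
    simpa using h2
  -- Case 2 : `1 ≤ v^K`
  by_cases hK2 : le 1 (v ^ K)
  · refine ⟨0, ?_⟩
    have h1 := hinv (v ^ K) 1 b⁻¹ hb
    rw [mul_one, hvK] at h1
    have h2 := htrans _ _ _ hK2 h1
    simpa using h2
  -- now K ≠ 0
  have hKne : K ≠ 0 := by
    rintro rfl
    exact hK1 (by simpa using hrefl 1)
  rcases hKne.lt_or_gt with hKneg | hKpos
  · -- K < 0 : get 1 ≤ a and 1 ≤ v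
    have hL : (((-K).toNat : ℤ)) = -K := Int.toNat_of_nonneg (by omega)
    have ha : le 1 a := by
      rcases htotal 1 a with h | h
      · exact h
      · exfalso
        have hai : le 1 a⁻¹ := by
          have h2 := hinv a⁻¹ a 1 h
          rwa [inv_mul_cancel, mul_one] at h2
        have h3 := aux_pos_pow hrefl htrans hinv hai ((-K).toNat)
        rw [inv_pow, ← zpow_natCast, hL, zpow_neg, inv_inv] at h3
        exact hK1 h3
    have hv1 : le 1 v := by
      rcases htotal 1 v with h | h
      · exact h
      · exfalso
        have hvi : le 1 v⁻¹ := by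
          have h2 := hinv v⁻¹ v 1 h
          rwa [inv_mul_cancel, mul_one] at h2
        have h3 := aux_pos_pow hrefl htrans hinv hvi ((-K).toNat)
        rw [inv_pow, ← zpow_natCast, hL, zpow_neg, inv_inv] at h3
        exact hK2 h3
    have hxpos : le 1 x := by
      rw [← hva]; exact aux_pos_mul htrans hinv hv1 ha
    by_cases hcase : ∃ j : ℕ, le 1 (x ^ (j : ℤ) * v⁻¹ * (x ^ (j : ℤ))⁻¹)
    · -- conjugation trick, m₁ = -j
      obtain ⟨j, hj⟩ := hcase
      refine ⟨-(j : ℤ), ?_⟩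
      have hc : le 1 (x ^ (j : ℤ)) := by
        have := aux_pos_pow hrefl htrans hinv hxpos j
        rwa [← zpow_natCast] at this
      have hconjK : le 1 (x ^ (j : ℤ) * v ^ K * (x ^ (j : ℤ))⁻¹) := by
        have h3 := aux_pos_pow hrefl htrans hinv hj ((-K).toNat)
        rw [conj_pow, inv_pow, ← zpow_natCast, hL, zpow_neg, inv_inv] at h3
        exact h3
      have h4 := aux_conj_case htrans hinv hb hc hconjK
      rw [hvK] at h4
      rw [zpow_neg]
      exact h4
    · -- product identity, m₁ = 0
      push_neg at hcase
      have hdj : ∀ j : ℕ, le 1 (x ^ (j : ℤ) * v * (x ^ (j : ℤ))⁻¹) := by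
        intro j
        have h1 := aux_pos_inv htotal hinv (hcase j)
        rwa [mul_inv_rev, mul_inv_rev, inv_inv, inv_inv, ← mul_assoc] at h1
      have hxa : v = x * a⁻¹ := by rw [← hva]; group
      have hE : ∀ n : ℕ, le 1 (x ^ (n : ℤ) * a⁻¹ ^ (n : ℤ)) := by
        intro n
        induction n with
        | zero => simpa using hrefl 1
        | succ n ih =>
          have h1 := aux_pos_mul htrans hinv (hdj n) ih
          have heq : (x ^ (n : ℤ) * v * (x ^ (n : ℤ))⁻¹) * (x ^ (n : ℤ) * a⁻¹ ^ (n : ℤ))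
              = x ^ ((n + 1 : ℕ) : ℤ) * a⁻¹ ^ ((n + 1 : ℕ) : ℤ) := by
            have hcast : ((n + 1 : ℕ) : ℤ) = (n : ℤ) + 1 := by push_cast; ring
            rw [hcast, hxa]; group
          rwa [heq] at h1
      refine ⟨0, ?_⟩
      have h1 := aux_pos_mul htrans hinv (hp K) (hE ((-K).toNat))
      rw [hL] at h1
      have heq2 : b⁻¹ * x ^ K * (x ^ (-K) * a⁻¹ ^ (-K)) = b⁻¹ * a ^ K := by group
      rw [heq2] at h1
      simpa using h1
  · -- K > 0 : get 1 ≤ a⁻¹ and 1 ≤ v⁻¹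
    have hL : ((K.toNat : ℤ)) = K := Int.toNat_of_nonneg (by omega)
    have hai : le 1 a⁻¹ := by
      refine aux_pos_inv htotal hinv (fun h => hK1 ?_)
      have h3 := aux_pos_pow hrefl htrans hinv h K.toNat
      rwa [← zpow_natCast, hL] at h3
    have hvi : le 1 v⁻¹ := by
      refine aux_pos_inv htotal hinv (fun h => hK2 ?_)
      have h3 := aux_pos_pow hrefl htrans hinv h K.toNat
      rwa [← zpow_natCast, hL] at h3
    have hxneg : le 1 x⁻¹ := by
      have h1 := aux_pos_mul htrans hinv hai hvi
      have : a⁻¹ * v⁻¹ = x⁻¹ := by rw [← hva]; group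
      rwa [this] at h1
    by_cases hcase : ∃ j : ℕ, le 1 ((x ^ (j : ℤ))⁻¹ * v * ((x ^ (j : ℤ))⁻¹)⁻¹)
    · -- conjugation trick, m₁ = j
      obtain ⟨j, hj⟩ := hcase
      refine ⟨(j : ℤ), ?_⟩
      have hc : le 1 (x ^ (j : ℤ))⁻¹ := by
        have := aux_pos_pow hrefl htrans hinv hxneg j
        rwa [inv_pow, ← zpow_natCast] at this
      have hconjK : le 1 ((x ^ (j : ℤ))⁻¹ * v ^ K * ((x ^ (j : ℤ))⁻¹)⁻¹) := by
        have h3 := aux_pos_pow hrefl htrans hinv hj K.toNat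
        rw [conj_pow, ← zpow_natCast v, hL] at h3
        exact h3
      have h4 := aux_conj_case htrans hinv hb hc hconjK
      rw [hvK, inv_inv] at h4
      exact h4
    · -- product identity, m₁ = 1
      push_neg at hcase
      have hdj : ∀ j : ℕ, le 1 ((x ^ (j : ℤ))⁻¹ * v⁻¹ * (x ^ (j : ℤ))) := by
        intro j
        have h1 := aux_pos_inv htotal hinv (hcase j)
        rwa [mul_inv_rev, mul_inv_rev, inv_inv, inv_inv, ← mul_assoc] at h1
      have hvix : v⁻¹ = a * x⁻¹ := by rw [← hva]; group
      have hE : ∀ n : ℕ, le 1 ((x ^ (n : ℤ))⁻¹ * a ^ (n : ℤ)) := by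
        intro n
        induction n with
        | zero => simpa using hrefl 1
        | succ n ih =>
          have h1 := aux_pos_mul htrans hinv (hdj (n + 1)) ih
          have heq : ((x ^ ((n + 1 : ℕ) : ℤ))⁻¹ * v⁻¹ * (x ^ ((n + 1 : ℕ) : ℤ)))
                * ((x ^ (n : ℤ))⁻¹ * a ^ (n : ℤ))
              = (x ^ ((n + 1 : ℕ) : ℤ))⁻¹ * a ^ ((n + 1 : ℕ) : ℤ) := by
            have hcast : ((n + 1 : ℕ) : ℤ) = (n : ℤ) + 1 := by push_cast; ring
            rw [hcast, hvix]; group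
          rwa [heq] at h1
      refine ⟨1, ?_⟩
      have h1 := aux_pos_mul htrans hinv (hp (K - 1)) (hE ((K - 1).toNat))
      have hL1 : (((K - 1).toNat : ℤ)) = K - 1 := Int.toNat_of_nonneg (by omega)
      rw [hL1] at h1
      have heq2 : b⁻¹ * x ^ (K - 1) * ((x ^ (K - 1))⁻¹ * a ^ (K - 1))
          = b⁻¹ * a ^ (K - 1) := by group
      rw [heq2] at h1
      have h2 := aux_pos_mul htrans hinv hai h1
      have heq3 : a⁻¹ * (b⁻¹ * a ^ (K - 1)) = x⁻¹ * (b⁻¹ * a ^ K) := by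
        rw [hx, hv]; group
      rw [heq3] at h2
      have h4 := hinv x 1 (x⁻¹ * (b⁻¹ * a ^ K)) h2
      rwa [mul_one, mul_inv_cancel_left, ← zpow_one x] at h4

end Aux

/-- The chained inequality from Section 3 of the paper: in a group with a
left-invariant total preorder containing elements `a i`, `b i` (indices in
`ZMod n`) satisfying the relations of the presentation, if
`1 ≤ (b i)⁻¹ (a (i+1))^m` for all `i` and `m`, then for every `i` and every
integer `m₂` there is an integer `m₁` with
`(b i · a (i+1))⁻¹ (a (i+1))^{m₁} ≤ (b (i-1) · a i)⁻¹ (a i)^{m₂}`. -/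
theorem stmt9 {G : Type*} [Group G] (n : ℕ) (hn : 1 ≤ n) (k : ZMod n → ℤ)
    (le : G → G → Prop)
    (hrefl : ∀ g, le g g)
    (htrans : ∀ x y z, le x y → le y z → le x z)
    (htotal : ∀ x y, le x y ∨ le y x)
    (hinv : ∀ f g h, le g h → le (f * g) (f * h))
    (a b : ZMod n → G)
    (rel1 : ∀ i : ZMod n, a (i + 1) = (b i)⁻¹ * a i * b i * a i)
    (rel2 : ∀ i : ZMod n, a i ^ (k i) = b i * a i * b i * (b (i - 1))⁻¹)
    (hyp : ∀ (i : ZMod n) (m : ℤ), le 1 ((b i)⁻¹ * a (i + 1) ^ m)) :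
    ∀ (i : ZMod n) (m₂ : ℤ), ∃ m₁ : ℤ,
      le ((b i * a (i + 1))⁻¹ * a (i + 1) ^ m₁)
        ((b (i - 1) * a i)⁻¹ * a i ^ m₂) := by
  intro i m₂
  obtain ⟨m₁, h⟩ := aux_key hrefl htrans htotal hinv (a i) (b i) (a (i + 1))
    (rel1 i) (hyp i) (k i + m₂)
  refine ⟨m₁, ?_⟩
  have h2 := hinv (b i * a (i + 1))⁻¹ _ _ h
  have heq : (b i * a (i + 1))⁻¹ * ((b i)⁻¹ * a i ^ (k i + m₂))
      = (b (i - 1) * a i)⁻¹ * a i ^ m₂ := by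
    rw [zpow_add, rel2 i, rel1 i]
    group
  rwa [heq] at h2
end

section
/- Let n ≥ 1 and k₁,…,kₙ ∈ ℤ, and let G(n,k) be the group with presentation ⟨a₁,…,aₙ, b₁,…,bₙ ∣ a_{i+1} = b_i⁻¹ a_i b_i a_i, a_i^{k_i} = b_i a_i b_i b_{i-1}⁻¹ (indices modulo n)⟩. There is no linear order ≤ on G(n,k) invariant under left multiplication such that 1 < g a₁ g⁻¹ for every g ∈ G(n,k). -/
/-- The relations of the presentation
`⟨a₁,…,aₙ, b₁,…,bₙ ∣ a_{i+1} = bᵢ⁻¹ aᵢ bᵢ aᵢ, aᵢ^{kᵢ} = bᵢ aᵢ bᵢ b_{i-1}⁻¹⟩`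
(indices modulo `n`), where the generator `aᵢ` is `Sum.inl i` and the
generator `bᵢ` is `Sum.inr i`, for `i : ZMod n`. -/
def relsG (n : ℕ) (k : ZMod n → ℤ) : Set (FreeGroup (ZMod n ⊕ ZMod n)) :=
  {r | ∃ i : ZMod n,
      r = FreeGroup.of (Sum.inl (i + 1)) *
          ((FreeGroup.of (Sum.inr i))⁻¹ * FreeGroup.of (Sum.inl i) *
            FreeGroup.of (Sum.inr i) * FreeGroup.of (Sum.inl i))⁻¹} ∪
  {r | ∃ i : ZMod n,
      r = FreeGroup.of (Sum.inl i) ^ (k i) *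
          (FreeGroup.of (Sum.inr i) * FreeGroup.of (Sum.inl i) *
            FreeGroup.of (Sum.inr i) * (FreeGroup.of (Sum.inr (i - 1)))⁻¹)⁻¹}

/-- Second case of Section 3: there is no left-invariant linear order on
`G(n,k)` making every conjugate of `a₁` strictly positive. -/
theorem stmt12 (n : ℕ) (hn : 1 ≤ n) (k : ZMod n → ℤ) :
    ¬ ∃ le : PresentedGroup (relsG n k) → PresentedGroup (relsG n k) → Prop,
      IsLinearOrder (PresentedGroup (relsG n k)) le ∧
        (∀ f g h : PresentedGroup (relsG n k), le g h → le (f * g) (f * h)) ∧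
        ∀ g : PresentedGroup (relsG n k),
          le 1 (g * PresentedGroup.of (Sum.inl (1 : ZMod n)) * g⁻¹) ∧
            ¬ le (g * PresentedGroup.of (Sum.inl (1 : ZMod n)) * g⁻¹) 1 := by
  rintro ⟨le, hlin, hinv, hpos⟩
  have hrefl : ∀ x, le x x := hlin.refl
  have htrans : ∀ {x y z}, le x y → le y z → le x z :=
    fun h1 h2 => hlin.trans _ _ _ h1 h2
  have htot : ∀ x y, le x y ∨ le y x := hlin.total
  set a : ZMod n → PresentedGroup (relsG n k) := fun i => PresentedGroup.of (Sum.inl i) with ha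
  set b : ZMod n → PresentedGroup (relsG n k) := fun i => PresentedGroup.of (Sum.inr i) with hb
  -- relation 1 holds in G
  have rel1 : ∀ i : ZMod n, a (i + 1) = (b i)⁻¹ * a i * b i * a i := by
    intro i
    have hr : (FreeGroup.of (Sum.inl (i + 1)) *
          ((FreeGroup.of (Sum.inr i))⁻¹ * FreeGroup.of (Sum.inl i) *
            FreeGroup.of (Sum.inr i) * FreeGroup.of (Sum.inl i))⁻¹) ∈ relsG n k :=
      Or.inl ⟨i, rfl⟩
    have h1 : PresentedGroup.mk (relsG n k) (FreeGroup.of (Sum.inl (i + 1)) *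
          ((FreeGroup.of (Sum.inr i))⁻¹ * FreeGroup.of (Sum.inl i) *
            FreeGroup.of (Sum.inr i) * FreeGroup.of (Sum.inl i))⁻¹) = 1 :=
      (QuotientGroup.eq_one_iff _).mpr (Subgroup.subset_normalClosure hr)
    simp only [map_mul, map_inv] at h1
    have : a (i + 1) * ((b i)⁻¹ * a i * b i * a i)⁻¹ = 1 := by
      simpa [ha, hb, PresentedGroup.of] using h1
    exact mul_inv_eq_one.mp this
  -- positivity predicate
  have hPmul : ∀ x y : PresentedGroup (relsG n k), ¬ le x 1 → ¬ le y 1 → ¬ le (x * y) 1 := by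
    intro x y hx hy hxy
    have h1y : le 1 y := (htot 1 y).resolve_right hy
    have : le x (x * y) := by simpa using hinv x 1 y h1y
    exact hx (htrans this hxy)
  -- the subsemigroup generated by conjugates of a 1
  set S : Subsemigroup (PresentedGroup (relsG n k)) :=
    Subsemigroup.closure {x | ∃ g, x = g * a 1 * g⁻¹} with hS
  have hgen : ∀ g : PresentedGroup (relsG n k), g * a 1 * g⁻¹ ∈ S := fun g =>
    Subsemigroup.subset_closure ⟨g, rfl⟩
  have hSP : ∀ x ∈ S, ¬ le x 1 := by
    intro x hx
    induction hx using Subsemigroup.closure_induction with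
    | mem x hx => obtain ⟨g, rfl⟩ := hx; exact (hpos g).2
    | mul x y _ _ hx hy => exact hPmul x y hx hy
  have hSconj : ∀ x ∈ S, ∀ g, g * x * g⁻¹ ∈ S := by
    intro x hx
    induction hx using Subsemigroup.closure_induction with
    | mem x hx =>
        intro g; obtain ⟨g', rfl⟩ := hx
        have : g * (g' * a 1 * g'⁻¹) * g⁻¹ = (g * g') * a 1 * (g * g')⁻¹ := by group
        rw [this]; exact hgen _
    | mul x y _ _ hx hy =>
        intro g
        have : g * (x * y) * g⁻¹ = (g * x * g⁻¹) * (g * y * g⁻¹) := by group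
        rw [this]; exact mul_mem (hx g) (hy g)
  -- main induction
  have key : ∀ m : ℕ, a (1 + (m : ZMod n)) ∈ S ∧
      (m = 0 ∨ a (1 + (m : ZMod n)) * (a 1)⁻¹ ∈ S) := by
    intro m
    induction m with
    | zero =>
        constructor
        · simpa using hgen 1
        · exact Or.inl rfl
    | succ m ih =>
        obtain ⟨h1, h2⟩ := ih
        have hcast : (1 + ((m + 1 : ℕ) : ZMod n)) = (1 + (m : ZMod n)) + 1 := by
          push_cast; ring
        have hrel := rel1 (1 + (m : ZMod n))
        rw [hcast, hrel]
        set i := (1 + (m : ZMod n))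
        have hc : (b i)⁻¹ * a i * b i ∈ S := by
          have := hSconj (a i) h1 (b i)⁻¹
          simpa using this
        constructor
        · have : (b i)⁻¹ * a i * b i * a i = ((b i)⁻¹ * a i * b i) * a i := by group
          rw [this]; exact mul_mem hc h1
        · refine Or.inr ?_
          rcases h2 with h2 | h2
          · subst h2
            have : (b i)⁻¹ * a i * b i * a i * (a 1)⁻¹ = (b i)⁻¹ * a i * b i := by
              simp only [i]; push_cast; group
            rw [this]; exact hc
          · have : (b i)⁻¹ * a i * b i * a i * (a 1)⁻¹ =
                ((b i)⁻¹ * a i * b i) * (a i * (a 1)⁻¹) := by group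
            rw [this]; exact mul_mem hc h2
  -- conclude
  obtain ⟨-, h2⟩ := key n
  rcases h2 with h2 | h2
  · omega
  · rw [ZMod.natCast_self] at h2
    simp only [add_zero, mul_inv_cancel] at h2
    exact hSP 1 h2 (hrefl 1)
end

section
/- Let n ≥ 1 and let G be a group equipped with a linear order ≤ invariant under left multiplication, containing elements a₁,…,aₙ, b₁,…,bₙ with a_{i+1} = b_i⁻¹ a_i b_i a_i for all i (indices modulo n). If 1 ≤ b_i⁻¹ a_i b_i for every i, then a₁ = a₂ = ⋯ = aₙ. -/
/-!
Write `d i = a (i + 1) * (a i)⁻¹`; the hypothesis says that `d i = (b i)⁻¹ * a i * b i ≥ 1`.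
Since products of elements `≥ 1` are `≥ 1` under a left-invariant order, the telescoping products
`a (i + k) * (a i)⁻¹ = d (i + k - 1) * ⋯ * d i` are `≥ 1` for every `k : ℕ`. The indices being
cyclic, both `a j * (a i)⁻¹` and its inverse `a i * (a j)⁻¹` are then `≥ 1`, which forces
`a j * (a i)⁻¹ = 1`.
-/

section LeftOrderedGroup

variable {G : Type*} [Group G] [PartialOrder G] [MulLeftMono G]

theorem eq_one_of_one_le_of_one_le_inv {x : G} (h : 1 ≤ x) (h' : 1 ≤ x⁻¹) : x = 1 :=
  le_antisymm (one_le_inv'.mp h') h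

theorem one_le_mul_inv_add_natCast {R : Type*} [AddMonoidWithOne R] {a : R → G}
    (h : ∀ i, 1 ≤ a (i + 1) * (a i)⁻¹) (i : R) (k : ℕ) : 1 ≤ a (i + k) * (a i)⁻¹ := by
  induction k with
  | zero => simp
  | succ k ih =>
    calc (1 : G) ≤ a (i + k + 1) * (a (i + k))⁻¹ * (a (i + k) * (a i)⁻¹) :=
          one_le_mul (h (i + k)) ih
      _ = a (i + (k + 1 : ℕ)) * (a i)⁻¹ := by rw [Nat.cast_succ, ← add_assoc]; group

theorem ZMod.eq_of_one_le_mul_inv_succ {n : ℕ} [NeZero n] {a : ZMod n → G}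
    (h : ∀ i, 1 ≤ a (i + 1) * (a i)⁻¹) (i j : ZMod n) : a i = a j := by
  have reach : ∀ i j : ZMod n, 1 ≤ a j * (a i)⁻¹ := fun i j => by
    simpa using one_le_mul_inv_add_natCast h i (j - i).val
  have key : a j * (a i)⁻¹ = 1 :=
    eq_one_of_one_le_of_one_le_inv (reach i j) (by simpa using reach j i)
  exact (mul_inv_eq_one.mp key).symm

end LeftOrderedGroup

/-- A step in Section 3 of the paper: in a group with a left-invariant
linear order containing elements `a i`, `b i` (indices in `ZMod n`) with
`a (i+1) = (b i)⁻¹ a i (b i) (a i)` for all `i`, if `1 ≤ (b i)⁻¹ (a i) (b i)`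
for every `i`, then all the `a i` are equal. -/
theorem stmt14 {G : Type*} [Group G] (n : ℕ) (hn : 1 ≤ n)
    (le : G → G → Prop)
    (hlin : IsLinearOrder G le)
    (hinv : ∀ f g h, le g h → le (f * g) (f * h))
    (a b : ZMod n → G)
    (rel1 : ∀ i : ZMod n, a (i + 1) = (b i)⁻¹ * a i * b i * a i)
    (hyp : ∀ i : ZMod n, le 1 ((b i)⁻¹ * a i * b i)) :
    ∀ i j : ZMod n, a i = a j := by
  have : NeZero n := NeZero.of_pos hn
  let _ : PartialOrder G :=
    { le := le
      le_refl := hlin.refl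
      le_trans := fun _ _ _ => hlin.trans _ _ _
      le_antisymm := fun _ _ => hlin.antisymm _ _ }
  have : MulLeftMono G := ⟨fun f _ _ => hinv f _ _⟩
  refine ZMod.eq_of_one_le_mul_inv_succ fun i => ?_
  rw [rel1 i, mul_inv_cancel_right]
  exact hyp i
end

section
/- Let n ≥ 1 and k₁,…,kₙ ∈ ℤ, and let G be a group equipped with a linear order ≤ invariant under left multiplication, containing elements a₁,…,aₙ, b₁,…,bₙ satisfying a_{i+1} = b_i⁻¹ a_i b_i a_i for all i (indices modulo n). If 1 ≤ g a₁ g⁻¹ for every g ∈ G, then a_i = 1 for all i = 1,…,n. -/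
/-- The second case of Section 3 of the paper: in a group with a
left-invariant linear order containing elements `a i`, `b i` (indices in
`ZMod n`) with `a (i+1) = (b i)⁻¹ a i (b i) (a i)` for all `i`, if every
conjugate of `a 1` is nonnegative, then `a i = 1` for all `i`. -/
theorem stmt15 {G : Type*} [Group G] (n : ℕ) (hn : 1 ≤ n) (k : ZMod n → ℤ)
    (le : G → G → Prop)
    (hlin : IsLinearOrder G le)
    (hinv : ∀ f g h, le g h → le (f * g) (f * h))
    (a b : ZMod n → G)
    (rel1 : ∀ i : ZMod n, a (i + 1) = (b i)⁻¹ * a i * b i * a i)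
    (hyp : ∀ g : G, le 1 (g * a 1 * g⁻¹)) :
    ∀ i : ZMod n, a i = 1 := by
  haveI : NeZero n := ⟨by omega⟩
  have htrans := hlin.trans
  have hanti := hlin.antisymm
  -- product of nonnegatives is nonnegative
  have hmul : ∀ x y : G, le 1 x → le 1 y → le 1 (x * y) := by
    intro x y hx hy
    have := hinv x 1 y hy
    rw [mul_one] at this
    exact htrans _ _ _ hx this
  -- positivity of conjugates propagates
  have step : ∀ i : ZMod n, (∀ g : G, le 1 (g * a i * g⁻¹)) →
      (∀ g : G, le 1 (g * a (i + 1) * g⁻¹)) := by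
    intro i hi g
    have h1 : le 1 ((g * (b i)⁻¹) * a i * (g * (b i)⁻¹)⁻¹) := hi _
    have h2 : le 1 (g * a i * g⁻¹) := hi g
    have := hmul _ _ h1 h2
    have heq : ((g * (b i)⁻¹) * a i * (g * (b i)⁻¹)⁻¹) * (g * a i * g⁻¹)
        = g * a (i + 1) * g⁻¹ := by
      rw [rel1 i]; group
    rwa [heq] at this
  have pos : ∀ m : ℕ, ∀ g : G, le 1 (g * a (1 + (m : ZMod n)) * g⁻¹) := by
    intro m
    induction m with
    | zero => simpa using hyp
    | succ m ih =>
      have := step _ ih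
      simpa [add_assoc, Nat.cast_succ] using this
  have posAll : ∀ i : ZMod n, ∀ g : G, le 1 (g * a i * g⁻¹) := by
    intro i
    have h := pos (i - 1).val
    rwa [ZMod.natCast_val, ZMod.cast_id, add_sub_cancel] at h
  -- le (a i) (a (i+1))
  have mono : ∀ i : ZMod n, le (a i) (a (i + 1)) := by
    intro i
    have h := posAll i ((a i)⁻¹ * (b i)⁻¹)
    have := hinv (a i) _ _ h
    rw [mul_one] at this
    have heq : a i * ((a i)⁻¹ * (b i)⁻¹ * a i * ((a i)⁻¹ * (b i)⁻¹)⁻¹) = a (i + 1) := by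
      rw [rel1 i]; group
    rwa [heq] at this
  have chain : ∀ m : ℕ, ∀ i : ZMod n, le (a i) (a (i + (m : ZMod n))) := by
    intro m
    induction m with
    | zero => intro i; simpa using hlin.refl (a i)
    | succ m ih =>
      intro i
      have h1 := ih i
      have h2 := mono (i + (m : ZMod n))
      have := htrans _ _ _ h1 h2
      simpa [add_assoc, Nat.cast_succ] using this
  have eqstep : ∀ i : ZMod n, a (i + 1) = a i := by
    intro i
    apply hanti
    · have h := chain (n - 1) (i + 1)
      have hcast : (i + 1) + ((n - 1 : ℕ) : ZMod n) = i := by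
        have : ((n - 1 : ℕ) : ZMod n) = -1 := by
          have hsum : ((n - 1 : ℕ) : ZMod n) + 1 = 0 := by
            have hnn : n - 1 + 1 = n := by omega
            calc ((n - 1 : ℕ) : ZMod n) + 1 = (((n - 1) + 1 : ℕ) : ZMod n) := by push_cast; ring
              _ = 0 := by rw [hnn, ZMod.natCast_self]
          linear_combination hsum
        rw [this]; ring
      rwa [hcast] at h
    · exact mono i
  intro i
  have h := eqstep i
  rw [rel1 i] at h
  have hb : (b i)⁻¹ * a i * b i = 1 := by
    conv at h => rhs; rw [← one_mul (a i)]
    exact mul_right_cancel h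
  have : a i = 1 := by
    have := congrArg (fun x => b i * x * (b i)⁻¹) hb
    simpa [mul_assoc] using this
  exact this
end
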